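/- Let u ∈ L²([0,1], ℝ) and define c₁ := 12·(s₀ + v₀ − s_f + ∫₀¹ (1 − τ)·u(τ) dτ) − 6·(v₀ − v_f + ∫₀¹ u(τ) dτ) and c₂ := −6·(s₀ + v₀ − s_f + ∫₀¹ (1 − τ)·u(τ) dτ) + 2·(v₀ − v_f + ∫₀¹ u(τ) dτ). Then the function w defined by w(t) := u(t) + c₁·t + c₂ belongs to 𝒜 and is the metric projection of u onto 𝒜; that is, ‖u − w‖ ≤ ‖u − z‖ for every z ∈ 𝒜. -/

import Mathlib

/-!
The two constraints defining 𝒜 are the inner products with `1` and `1 - t`, so the direction of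
the affine set 𝒜 is the orthogonal complement of the affine functions `t ↦ a t + b`. The
coefficients `c₁, c₂` solve the 2×2 linear system `⟪1, c₁ t + c₂⟫ = c₁/2 + c₂`,
`⟪1 - t, c₁ t + c₂⟫ = c₁/6 + c₂/2` that puts `w = u + c₁ t + c₂` in 𝒜. Then for `z ∈ 𝒜` the
affine residual `u - w` is orthogonal to `w - z`, and Pythagoras gives
`‖u - z‖² = ‖u - w‖² + ‖w - z‖²`.
-/

open MeasureTheory

/-- The measure on ℝ representing integration over the interval [0,1]. -/
noncomputable def mu01 : Measure ℝ := volume.restrict (Set.Icc 0 1)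

/-- The affine set 𝒜 of controls in L²([0,1],ℝ) steering the double integrator
from (s₀, v₀) to (s_f, v_f). -/
def setA (s0 sf v0 vf : ℝ) : Set (Lp ℝ 2 mu01) :=
  {u | (∫ t, u t ∂mu01) = vf - v0 ∧ (∫ t, (1 - t) * u t ∂mu01) = sf - s0 - v0}

/-- The box ℬ of controls bounded in absolute value by `a` a.e. on [0,1]. -/
def setB (a : ℝ) : Set (Lp ℝ 2 mu01) :=
  {u | ∀ᵐ t ∂mu01, |u t| ≤ a}

open scoped RealInnerProductSpace

section InnerProductSpace

variable {E : Type*} [NormedAddCommGroup E] [InnerProductSpace ℝ E]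

theorem norm_sub_le_norm_sub_of_inner_eq_zero {u w z : E} (h : ⟪u - w, w - z⟫ = 0) :
    ‖u - w‖ ≤ ‖u - z‖ := by
  have hpyth : ‖u - z‖ ^ 2 = ‖u - w‖ ^ 2 + ‖w - z‖ ^ 2 := by
    rw [← sub_add_sub_cancel u w z, norm_add_sq_real, h]
    ring
  exact le_of_sq_le_sq (by nlinarith [sq_nonneg ‖w - z‖]) (norm_nonneg _)

theorem norm_sub_le_norm_sub_of_inner_eq_inner {e f u w z : E} {a b : ℝ}
    (huw : u - w = a • e + b • f) (he : ⟪e, w⟫ = ⟪e, z⟫) (hf : ⟪f, w⟫ = ⟪f, z⟫) :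
    ‖u - w‖ ≤ ‖u - z‖ := by
  apply norm_sub_le_norm_sub_of_inner_eq_zero
  rw [huw, inner_add_left, real_inner_smul_left, real_inner_smul_left, inner_sub_right,
    inner_sub_right, he, hf]
  ring

end InnerProductSpace

instance : IsFiniteMeasure mu01 := ⟨by simp [mu01, Real.volume_Icc]⟩

theorem integral_mu01_quadratic (a b c : ℝ) :
    ∫ t, a * t ^ 2 + b * t + c ∂mu01 = a / 3 + b / 2 + c := by
  rw [mu01, integral_Icc_eq_integral_Ioc, ← intervalIntegral.integral_of_le zero_le_one,
    intervalIntegral.integral_add (Continuous.intervalIntegrable (by fun_prop) _ _)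
      (Continuous.intervalIntegrable (by fun_prop) _ _),
    intervalIntegral.integral_add (Continuous.intervalIntegrable (by fun_prop) _ _)
      (Continuous.intervalIntegrable (by fun_prop) _ _),
    intervalIntegral.integral_const_mul, intervalIntegral.integral_const_mul, integral_pow,
    integral_id, intervalIntegral.integral_const, smul_eq_mul]
  ring

theorem memLp_affine_mu01 (a b : ℝ) : MemLp (fun t => a * t + b) 2 mu01 := by
  refine MemLp.of_bound (by fun_prop) (|a| + |b|) ?_
  filter_upwards [ae_restrict_mem measurableSet_Icc] with t ⟨ht0, ht1⟩
  calc ‖a * t + b‖ ≤ |a| * |t| + |b| := (abs_add_le _ _).trans_eq (by rw [abs_mul])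
    _ ≤ |a| * 1 + |b| := by gcongr; exact abs_le.mpr ⟨by linarith, ht1⟩
    _ = |a| + |b| := by ring

noncomputable def affineL2 (a b : ℝ) : Lp ℝ 2 mu01 := (memLp_affine_mu01 a b).toLp _

theorem coeFn_affineL2 (a b : ℝ) : affineL2 a b =ᵐ[mu01] fun t => a * t + b :=
  (memLp_affine_mu01 a b).coeFn_toLp

theorem inner_affineL2 (a b : ℝ) (g : Lp ℝ 2 mu01) :
    ⟪affineL2 a b, g⟫ = ∫ t, (a * t + b) * g t ∂mu01 := by
  rw [L2.inner_def]
  refine integral_congr_ae ?_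
  filter_upwards [coeFn_affineL2 a b] with t ht
  rw [Real.inner_apply, ht]

theorem integral_eq_inner_affineL2 (g : Lp ℝ 2 mu01) :
    ∫ t, g t ∂mu01 = ⟪affineL2 0 1, g⟫ := by
  simp [inner_affineL2]

theorem integral_one_sub_mul_eq_inner_affineL2 (g : Lp ℝ 2 mu01) :
    ∫ t, (1 - t) * g t ∂mu01 = ⟪affineL2 (-1) 1, g⟫ := by
  simp [inner_affineL2, neg_add_eq_sub]

theorem mem_setA_iff {s0 sf v0 vf : ℝ} {z : Lp ℝ 2 mu01} :
    z ∈ setA s0 sf v0 vf ↔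
      ⟪affineL2 0 1, z⟫ = vf - v0 ∧ ⟪affineL2 (-1) 1, z⟫ = sf - s0 - v0 := by
  rw [← integral_eq_inner_affineL2, ← integral_one_sub_mul_eq_inner_affineL2]
  rfl

theorem inner_affineL2_zero_one (a b : ℝ) : ⟪affineL2 0 1, affineL2 a b⟫ = a / 2 + b := by
  rw [← integral_eq_inner_affineL2, integral_congr_ae (coeFn_affineL2 a b)]
  simpa using integral_mu01_quadratic 0 a b

theorem inner_affineL2_neg_one_one (a b : ℝ) :
    ⟪affineL2 (-1) 1, affineL2 a b⟫ = a / 6 + b / 2 := by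
  rw [← integral_one_sub_mul_eq_inner_affineL2,
    integral_congr_ae (g := fun t => -a * t ^ 2 + (a - b) * t + b), integral_mu01_quadratic]
  · ring
  filter_upwards [coeFn_affineL2 a b] with t ht
  rw [ht]
  ring

theorem affineL2_eq (a b : ℝ) :
    affineL2 a b = (-a) • affineL2 (-1) 1 + (a + b) • affineL2 0 1 := by
  refine Lp.ext ?_
  filter_upwards [coeFn_affineL2 a b, coeFn_affineL2 (-1) 1, coeFn_affineL2 0 1,
    Lp.coeFn_add ((-a) • affineL2 (-1) 1) ((a + b) • affineL2 0 1),
    Lp.coeFn_smul (-a) (affineL2 (-1) 1), Lp.coeFn_smul (a + b) (affineL2 0 1)]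
    with t h h₁ h₀ hadd hsmul₁ hsmul₀
  rw [h, hadd, Pi.add_apply, hsmul₁, hsmul₀, Pi.smul_apply, Pi.smul_apply, h₁, h₀, smul_eq_mul,
    smul_eq_mul]
  ring

/-- Projection onto 𝒜: the function w(t) = u(t) + c₁·t + c₂, with c₁ and c₂ given by
the stated integral formulas, belongs to 𝒜 and is the metric projection of u onto 𝒜. -/
theorem stmt_15 (s0 sf v0 vf : ℝ) (u : Lp ℝ 2 mu01) (c1 c2 : ℝ)
    (hc1 : c1 = 12 * (s0 + v0 - sf + ∫ t, (1 - t) * u t ∂mu01)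
        - 6 * (v0 - vf + ∫ t, u t ∂mu01))
    (hc2 : c2 = -6 * (s0 + v0 - sf + ∫ t, (1 - t) * u t ∂mu01)
        + 2 * (v0 - vf + ∫ t, u t ∂mu01)) :
    ∃ w : Lp ℝ 2 mu01,
      (∀ᵐ t ∂mu01, w t = u t + c1 * t + c2) ∧
      w ∈ setA s0 sf v0 vf ∧
      ∀ z ∈ setA s0 sf v0 vf, ‖u - w‖ ≤ ‖u - z‖ := by
  have hw : ∀ᵐ t ∂mu01, (u + affineL2 c1 c2) t = u t + c1 * t + c2 := by
    filter_upwards [Lp.coeFn_add u (affineL2 c1 c2), coeFn_affineL2 c1 c2] with t hadd h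
    rw [hadd, Pi.add_apply, h, add_assoc]
  have hwA : u + affineL2 c1 c2 ∈ setA s0 sf v0 vf := by
    rw [integral_eq_inner_affineL2, integral_one_sub_mul_eq_inner_affineL2] at hc1 hc2
    rw [mem_setA_iff, inner_add_right, inner_add_right, inner_affineL2_zero_one,
      inner_affineL2_neg_one_one, hc1, hc2]
    constructor <;> ring
  refine ⟨u + affineL2 c1 c2, hw, hwA, fun z hz => ?_⟩
  rw [mem_setA_iff] at hwA hz
  refine norm_sub_le_norm_sub_of_inner_eq_inner (a := c1) (b := -(c1 + c2)) ?_
    (hwA.2.trans hz.2.symm) (hwA.1.trans hz.1.symm)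
  rw [sub_add_cancel_left, affineL2_eq, neg_add, neg_smul, neg_neg, neg_smul]
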